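/- Let Γ be a modular complex and p,q vertices. (a) If p∧q exists then (p, p∧q, q) is a shortest subpath; conversely, if x ⪯ p, x ⪯ q and (p,x,q) is a shortest subpath, then p∧q exists and x = p∧q. (b) If p∨q exists then (p, p∨q, q) is a shortest subpath; conversely, if p ⪯ x, q ⪯ x and (p,x,q) is a shortest subpath, then p∨q exists and x = p∨q. -/

import Mathlib

namespace ZeroExt

variable {V : Type*}

/-- The metric interval `I(x,y)` in a graph. -/
def interval (G : SimpleGraph V) (x y : V) : Set V :=
  {z | G.dist x z + G.dist z y = G.dist x y}

/-- `m` is a median of `x, y, z`. -/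
def IsMedian (G : SimpleGraph V) (x y z m : V) : Prop :=
  m ∈ interval G x y ∧ m ∈ interval G y z ∧ m ∈ interval G x z

/-- A graph is modular if every triple of vertices has a median. -/
def Modular (G : SimpleGraph V) : Prop :=
  ∀ x y z : V, ∃ m : V, IsMedian G x y z m

/-- `(a,b,c)` is a shortest subpath. -/
def ShortestTriple (G : SimpleGraph V) (a b c : V) : Prop :=
  G.dist a b + G.dist b c = G.dist a c

/-- `(a,b,c,d)` is a shortest subpath. -/
def ShortestQuad (G : SimpleGraph V) (a b c d : V) : Prop :=
  G.dist a b + G.dist b c + G.dist c d = G.dist a d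

/-- `(x1,x2,x3,x4)` is an isometric rectangle. -/
def IsoRect (G : SimpleGraph V) (x1 x2 x3 x4 : V) : Prop :=
  ShortestTriple G x4 x1 x2 ∧ ShortestTriple G x1 x2 x3 ∧
    ShortestTriple G x2 x3 x4 ∧ ShortestTriple G x3 x4 x1

/-- A set of vertices is convex if it contains the interval of each pair of its points. -/
def Convex (G : SimpleGraph V) (U : Set V) : Prop :=
  ∀ x ∈ U, ∀ y ∈ U, interval G x y ⊆ U

/-- `g` is a gate of `q` at `U`. -/
def IsGate (G : SimpleGraph V) (U : Set V) (q g : V) : Prop :=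
  g ∈ U ∧ ∀ u ∈ U, G.dist q u = G.dist q g + G.dist g u

/-- A 4-cycle in a graph. -/
def IsFourCycle (G : SimpleGraph V) (x1 x2 x3 x4 : V) : Prop :=
  G.Adj x1 x2 ∧ G.Adj x2 x3 ∧ G.Adj x3 x4 ∧ G.Adj x4 x1 ∧ x1 ≠ x3 ∧ x2 ≠ x4

/-- A modular complex: a finite connected modular graph together with an
acyclic admissible edge orientation. -/
structure ModularComplex (V : Type*) [Fintype V] where
  G : SimpleGraph V
  connected : G.Connected
  modular : Modular G
  ori : V → V → Prop
  ori_adj : ∀ {x y : V}, ori x y → G.Adj x y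
  ori_total : ∀ {x y : V}, G.Adj x y → ori x y ∨ ori y x
  acyclic : ∀ {x y : V}, Relation.ReflTransGen ori x y → Relation.ReflTransGen ori y x → x = y
  admissible : ∀ {x1 x2 x3 x4 : V}, IsFourCycle G x1 x2 x3 x4 → ori x1 x2 → ori x4 x3

variable [Fintype V]

/-- The partial order `⪯` induced by the orientation. -/
def ModularComplex.le (Γ : ModularComplex V) : V → V → Prop :=
  Relation.ReflTransGen Γ.ori

/-- The order interval `[p,q]`. -/
def ModularComplex.Icc (Γ : ModularComplex V) (p q : V) : Set V :=
  {x | Γ.le p x ∧ Γ.le x q}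

/-- `m` is the greatest lower bound `p ∧ q`. -/
def ModularComplex.IsMeet (Γ : ModularComplex V) (p q m : V) : Prop :=
  Γ.le m p ∧ Γ.le m q ∧ ∀ x : V, Γ.le x p → Γ.le x q → Γ.le x m

/-- `j` is the least upper bound `p ∨ q`. -/
def ModularComplex.IsJoin (Γ : ModularComplex V) (p q j : V) : Prop :=
  Γ.le p j ∧ Γ.le q j ∧ ∀ x : V, Γ.le p x → Γ.le q x → Γ.le j x

/-- `(p,q)` is a Boolean pair. -/
def ModularComplex.BooleanPair (Γ : ModularComplex V) (p q : V) : Prop :=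
  ∃ (k : ℕ) (φ : Finset (Fin k) → V), Function.Injective φ ∧
    φ ∅ = p ∧ φ Finset.univ = q ∧
    ∀ (S : Finset (Fin k)) (i : Fin k), i ∉ S → Γ.ori (φ S) (φ (insert i S))

/-- An extended modular complex: a modular complex with an admissible relation `⊑`. -/
structure ExtendedModularComplex (V : Type*) [Fintype V] extends ModularComplex V where
  sq : V → V → Prop
  sq_le : ∀ {p q : V}, sq p q → toModularComplex.le p q
  sq_refl : ∀ p : V, sq p p
  sq_edge : ∀ {p q : V}, ori p q → sq p q
  sq_interval : ∀ {p q a b : V}, sq p q → toModularComplex.le a b →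
    a ∈ toModularComplex.Icc p q → b ∈ toModularComplex.Icc p q → sq a b
  sq_join : ∀ {p q1 q2 j : V}, sq p q1 → sq p q2 → toModularComplex.IsJoin q1 q2 j → sq p j
  sq_meet : ∀ {p1 p2 q m : V}, sq p1 q → sq p2 q → toModularComplex.IsMeet p1 p2 m → sq m q

/-- `L^+_p = {x : p ⊑ x}`. -/
def ExtendedModularComplex.Lpos (Γ : ExtendedModularComplex V) (p : V) : Set V :=
  {x | Γ.sq p x}

/-- `L^-_p = {x : x ⊑ p}`. -/
def ExtendedModularComplex.Lneg (Γ : ExtendedModularComplex V) (p : V) : Set V :=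
  {x | Γ.sq x p}

/-- `p, q` are ◇-neighbors. -/
def ExtendedModularComplex.DiamondNb (Γ : ExtendedModularComplex V) (p q : V) : Prop :=
  ∃ a b : V, Γ.sq a b ∧ p ∈ Γ.Icc a b ∧ q ∈ Γ.Icc a b

/-- The thickening `Δ(Γ)`. -/
def ExtendedModularComplex.thick (Γ : ExtendedModularComplex V) : SimpleGraph V where
  Adj p q := p ≠ q ∧ Γ.DiamondNb p q
  symm := by
    constructor
    rintro p q ⟨hne, a, b, hab, hp, hq⟩
    exact ⟨hne.symm, a, b, hab, hq, hp⟩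
  loopless := by constructor; rintro p ⟨hne, -⟩; exact hne rfl

end ZeroExt

/-!
Upward paths are geodesics: if `a ⪯ u → x → y` with `d(a,x) = d(a,u) + 1` but
`d(a,y) = d(a,u)`, the quadrangle condition gives a common neighbour `w` of `u` and `y` closer to
`a`, and admissibility of the square `x y w u` orients `u → w`, so the shorter upward path to `u`
would already step back towards `a`. In the same way, for `x ⪯ y` the first edge of every geodesic
from `x` to `y` points up, so `I(x,y) ⊆ [x,y]`; and climbing from `z₁` towards a median of
`z₁, z₂, p` shows that the principal ideals `{z | z ⪯ p}` are convex.

If `m = p ∧ q`, the median of `p, m, q` is a common lower bound above `m`, hence equals `m`, so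
`m ∈ I(p,q)`. Conversely, let `x ∈ I(p,q)` be a common lower bound and `y` another one. The median
`z` of `x, y, p` lies above `x` and `y`, below `p`, and by convexity below `q`; then
`d(p,q) ≤ d(p,z) + d(z,q) = d(p,q) - 2 d(x,z)`, so `y ⪯ z = x`. Joins are meets for the reversed
orientation.
-/

theorem SimpleGraph.Reachable.exists_adj_dist_add_one {V : Type*} {G : SimpleGraph V} {x z : V}
    (h : G.Reachable x z) (hne : x ≠ z) : ∃ w, G.Adj x w ∧ G.dist w z + 1 = G.dist x z := by
  obtain ⟨p, hp⟩ := h.exists_walk_length_eq_dist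
  cases p with
  | nil => exact absurd rfl hne
  | @cons _ w _ hxw q =>
    refine ⟨w, hxw, le_antisymm ?_ ?_⟩
    · simpa [← hp] using dist_le q
    · have := hxw.reachable.dist_triangle_left z
      rw [dist_eq_one_iff_adj.mpr hxw] at this
      omega

namespace ZeroExt

open SimpleGraph

variable {V : Type*} {G : SimpleGraph V}

theorem mem_interval_comm {x y z : V} : z ∈ interval G x y ↔ z ∈ interval G y x := by
  change _ = _ ↔ _ = _
  rw [SimpleGraph.dist_comm (u := x) (v := z), SimpleGraph.dist_comm (u := z) (v := y),
    SimpleGraph.dist_comm (u := x) (v := y), add_comm]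

theorem interval_induction (hG : G.Connected) {y : V} (P : V → Prop)
    (step : ∀ x w, P x → G.Adj x w → w ∈ interval G x y → P w) {x z : V} (hx : P x)
    (hz : z ∈ interval G x y) : P z := by
  induction hn : G.dist x z generalizing x with
  | zero => rwa [← hG.dist_eq_zero_iff.mp hn]
  | succ n ih =>
    have hz : G.dist x z + G.dist z y = G.dist x y := hz
    obtain ⟨w, hxw, hwz⟩ := (hG x z).exists_adj_dist_add_one (by rintro rfl; simp at hn)
    have hxw1 : G.dist x w = 1 := dist_eq_one_iff_adj.mpr hxw
    have h₁ : G.dist x y ≤ G.dist x w + G.dist w y := hG.dist_triangle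
    have h₂ : G.dist w y ≤ G.dist w z + G.dist z y := hG.dist_triangle
    exact ih (step x w hx hxw (by change _ = _; omega)) (by change _ = _; omega) (by omega)

namespace Modular

theorem dist_eq_add_one_or_of_adj (hmod : Modular G) (hG : G.Connected) {x y : V}
    (h : G.Adj x y) (z : V) :
    G.dist z y = G.dist z x + 1 ∨ G.dist z x = G.dist z y + 1 := by
  obtain ⟨m, hxy, hyz, hxz⟩ := hmod x y z
  have hxy : G.dist x m + G.dist m y = 1 := (dist_eq_one_iff_adj.mpr h) ▸ hxy
  have hyz : G.dist y m + G.dist m z = G.dist y z := hyz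
  have hxz : G.dist x m + G.dist m z = G.dist x z := hxz
  rw [SimpleGraph.dist_comm (u := z), SimpleGraph.dist_comm (u := z)]
  rcases Nat.eq_zero_or_pos (G.dist x m) with hxm | hxm
  · obtain rfl := hG.dist_eq_zero_iff.mp hxm
    rw [SimpleGraph.dist_comm] at hyz
    simp only [SimpleGraph.dist_self] at hxy
    omega
  · obtain rfl := hG.dist_eq_zero_iff.mp (show G.dist m y = 0 by omega)
    simp only [SimpleGraph.dist_self] at hyz
    omega

theorem quadrangle (hmod : Modular G) (hG : G.Connected) {x u v z : V}
    (hu : G.Adj u z) (hv : G.Adj v z) (huv : u ≠ v)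
    (hdu : G.dist x u + 1 = G.dist x z) (hdv : G.dist x v + 1 = G.dist x z) :
    ∃ w, G.Adj u w ∧ G.Adj v w ∧ G.dist x w + 1 = G.dist x u := by
  have huv₂ : G.dist u v = 2 := by
    have : G.dist u v ≤ G.dist u z + G.dist z v := hG.dist_triangle
    have : ¬G.Adj u v := fun h => by
      rcases hmod.dist_eq_add_one_or_of_adj hG h x with h | h <;> omega
    have := hG.one_lt_dist_of_ne_of_not_adj huv this
    rw [dist_eq_one_iff_adj.mpr hu, dist_eq_one_iff_adj.mpr hv.symm] at *
    omega
  obtain ⟨m, hxu, huv, hxv⟩ := hmod x u v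
  have hxu : G.dist x m + G.dist m u = G.dist x u := hxu
  have huv : G.dist u m + G.dist m v = 2 := huv₂ ▸ huv
  have hxv : G.dist x m + G.dist m v = G.dist x v := hxv
  rw [SimpleGraph.dist_comm (u := m)] at hxu
  have hum : G.dist u m ≠ 0 := fun h => by
    obtain rfl := hG.dist_eq_zero_iff.mp h
    omega
  have hmv : G.dist m v ≠ 0 := fun h => by
    obtain rfl := hG.dist_eq_zero_iff.mp h
    omega
  refine ⟨m, dist_eq_one_iff_adj.mp (by omega), dist_eq_one_iff_adj.mp ?_, by omega⟩
  rw [SimpleGraph.dist_comm]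
  omega

end Modular

variable [Fintype V]

namespace ModularComplex

variable (Γ : ModularComplex V)

theorem dist_add_one_of_le_of_ori {a x y : V} (hax : Γ.le a x) (hxy : Γ.ori x y) :
    Γ.G.dist a y = Γ.G.dist a x + 1 := by
  induction hax generalizing y with
  | refl => simp [dist_eq_one_iff_adj.mpr (Γ.ori_adj hxy)]
  | @tail u x _ hux ih =>
    have hdx := ih hux
    refine (Γ.modular.dist_eq_add_one_or_of_adj Γ.connected (Γ.ori_adj hxy) a).resolve_right ?_
    intro hdy
    have huy : u ≠ y := by
      rintro rfl
      exact (Γ.ori_adj hux).ne (Γ.acyclic (.single hux) (.single hxy))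
    obtain ⟨w, huw, hyw, hdw⟩ := Γ.modular.quadrangle Γ.connected (Γ.ori_adj hux)
      (Γ.ori_adj hxy).symm huy hdx.symm hdy.symm
    have hxw : x ≠ w := by rintro rfl; omega
    have := ih (Γ.admissible ⟨Γ.ori_adj hxy, hyw, huw.symm, Γ.ori_adj hux, hxw, huy.symm⟩ hxy)
    omega

theorem shortestTriple_of_le {p q r : V} (hpq : Γ.le p q) (hqr : Γ.le q r) :
    ShortestTriple Γ.G p q r := by
  induction hqr with
  | refl => simp [ShortestTriple]
  | @tail s r hqs hsr ih =>
    have h₁ := Γ.dist_add_one_of_le_of_ori (Relation.ReflTransGen.trans hpq hqs) hsr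
    have h₂ := Γ.dist_add_one_of_le_of_ori hqs hsr
    unfold ShortestTriple at *
    omega

theorem ori_and_le_of_le_of_adj {x y w : V} (hxy : Γ.le x y) (hxw : Γ.G.Adj x w)
    (hwy : Γ.G.dist w y + 1 = Γ.G.dist x y) : Γ.ori x w ∧ Γ.le w y := by
  induction hxy using Relation.ReflTransGen.head_induction_on generalizing w with
  | refl => simp at hwy
  | @head x y₁ hxy₁ hy₁y ih =>
    by_cases hw : w = y₁
    · subst hw
      exact ⟨hxy₁, hy₁y⟩
    have hd : 1 + Γ.G.dist y₁ y = Γ.G.dist x y := by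
      rw [← dist_eq_one_iff_adj.mpr (Γ.ori_adj hxy₁)]
      exact Γ.shortestTriple_of_le (.single hxy₁) hy₁y
    have := SimpleGraph.dist_comm (G := Γ.G) (u := y) (v := x)
    have := SimpleGraph.dist_comm (G := Γ.G) (u := y) (v := y₁)
    have := SimpleGraph.dist_comm (G := Γ.G) (u := y) (v := w)
    obtain ⟨r, hy₁r, hwr, hr⟩ := Γ.modular.quadrangle Γ.connected (x := y)
      (Γ.ori_adj hxy₁).symm hxw.symm (Ne.symm hw) (by omega) (by omega)
    have := SimpleGraph.dist_comm (G := Γ.G) (u := y) (v := r)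
    obtain ⟨hy₁r', hry⟩ := ih hy₁r (by omega)
    have hxr : x ≠ r := by rintro rfl; omega
    exact ⟨Γ.admissible ⟨hy₁r, hwr.symm, hxw.symm, Γ.ori_adj hxy₁, Ne.symm hw, hxr.symm⟩ hy₁r',
      .head (Γ.admissible ⟨Γ.ori_adj hxy₁, hy₁r, hwr.symm, hxw.symm, hxr, Ne.symm hw⟩
        hxy₁) hry⟩

theorem mem_Icc_of_mem_interval {x y z : V} (hxy : Γ.le x y) (hz : z ∈ interval Γ.G x y) :
    z ∈ Γ.Icc x y := by
  refine interval_induction Γ.connected (fun w => Γ.le x w ∧ Γ.le w y) ?_ ⟨.refl, hxy⟩ hz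
  rintro u w ⟨hxu, huy⟩ huw (hw : Γ.G.dist u w + Γ.G.dist w y = Γ.G.dist u y)
  rw [dist_eq_one_iff_adj.mpr huw, add_comm] at hw
  obtain ⟨hori, hwy⟩ := Γ.ori_and_le_of_le_of_adj huy huw hw
  exact ⟨hxu.tail hori, hwy⟩

theorem le_or_exists_ori_le {p z₁ z₂ : V} (h₁ : Γ.le z₁ p) (h₂ : Γ.le z₂ p) :
    Γ.le z₂ z₁ ∨ ∃ y, Γ.ori z₁ y ∧ Γ.le y p ∧ Γ.G.dist y z₂ + 1 = Γ.G.dist z₁ z₂ := by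
  obtain ⟨m, hm₁₂, hm₂p, hm₁p⟩ := Γ.modular z₁ z₂ p
  obtain ⟨hz₁m, hmp⟩ := Γ.mem_Icc_of_mem_interval h₁ hm₁p
  have hz₂m := (Γ.mem_Icc_of_mem_interval h₂ hm₂p).1
  rcases Relation.ReflTransGen.cases_head hz₁m with rfl | ⟨y, hz₁y, hym⟩
  · exact .inl hz₂m
  refine .inr ⟨y, hz₁y, Relation.ReflTransGen.trans hym hmp, ?_⟩
  have hm₁₂ : Γ.G.dist z₁ m + Γ.G.dist m z₂ = Γ.G.dist z₁ z₂ := hm₁₂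
  have hd : 1 + Γ.G.dist y m = Γ.G.dist z₁ m := by
    rw [← dist_eq_one_iff_adj.mpr (Γ.ori_adj hz₁y)]
    exact Γ.shortestTriple_of_le (.single hz₁y) hym
  have : Γ.G.dist y z₂ ≤ Γ.G.dist y m + Γ.G.dist m z₂ := Γ.connected.dist_triangle
  have : Γ.G.dist z₁ z₂ ≤ Γ.G.dist z₁ y + Γ.G.dist y z₂ := Γ.connected.dist_triangle
  rw [dist_eq_one_iff_adj.mpr (Γ.ori_adj hz₁y)] at this
  omega

theorem le_of_adj_of_dist_add_one {p z₁ z₂ w : V} (h₁ : Γ.le z₁ p) (h₂ : Γ.le z₂ p)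
    (hw : Γ.G.Adj z₁ w) (hwz : Γ.G.dist w z₂ + 1 = Γ.G.dist z₁ z₂) : Γ.le w p := by
  induction hn : Γ.G.dist z₁ z₂ using Nat.strong_induction_on generalizing z₁ w with
  | _ n ih =>
  rcases Γ.le_or_exists_ori_le h₁ h₂ with hz₂₁ | ⟨y, hz₁y, hyp, hy⟩
  · refine Relation.ReflTransGen.trans (Γ.mem_Icc_of_mem_interval hz₂₁ ?_).2 h₁
    have := SimpleGraph.dist_comm (G := Γ.G) (u := z₂) (v := z₁)
    have := SimpleGraph.dist_comm (G := Γ.G) (u := z₂) (v := w)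
    have : Γ.G.dist w z₁ = 1 := dist_eq_one_iff_adj.mpr hw.symm
    change _ = _
    omega
  by_cases hyw : y = w
  · exact hyw ▸ hyp
  have := SimpleGraph.dist_comm (G := Γ.G) (u := z₂) (v := z₁)
  have := SimpleGraph.dist_comm (G := Γ.G) (u := z₂) (v := y)
  have := SimpleGraph.dist_comm (G := Γ.G) (u := z₂) (v := w)
  obtain ⟨r, hyr, hwr, hr⟩ := Γ.modular.quadrangle Γ.connected (x := z₂)
    (Γ.ori_adj hz₁y).symm hw.symm hyw (by omega) (by omega)
  have := SimpleGraph.dist_comm (G := Γ.G) (u := z₂) (v := r)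
  have hrp := ih _ (by omega) hyp hyr (by omega) rfl
  have hz₁r : z₁ ≠ r := by rintro rfl; omega
  exact .head (Γ.admissible ⟨Γ.ori_adj hz₁y, hyr, hwr.symm, hw.symm, hz₁r, hyw⟩ hz₁y) hrp

theorem convex_setOf_le (p : V) : Convex Γ.G {x | Γ.le x p} := by
  intro z₁ h₁ z₂ h₂
  refine fun w hw => interval_induction Γ.connected (fun x => Γ.le x p) ?_ h₁ hw
  rintro x w hx hxw (hw : Γ.G.dist x w + Γ.G.dist w z₂ = Γ.G.dist x z₂)
  rw [dist_eq_one_iff_adj.mpr hxw, add_comm] at hw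
  exact Γ.le_of_adj_of_dist_add_one hx h₂ hxw hw

theorem IsMeet.shortestTriple {Γ : ModularComplex V} {p q m : V} (h : Γ.IsMeet p q m) :
    ShortestTriple Γ.G p m q := by
  obtain ⟨hmp, hmq, hmax⟩ := h
  obtain ⟨z, hzpm, hzmq, hzpq⟩ := Γ.modular p m q
  obtain ⟨hmz, hzp⟩ := Γ.mem_Icc_of_mem_interval hmp (mem_interval_comm.mp hzpm)
  obtain rfl := Γ.acyclic hmz (hmax z hzp (Γ.mem_Icc_of_mem_interval hmq hzmq).2)
  exact hzpq

theorem isMeet_of_shortestTriple {p q x : V} (hxp : Γ.le x p) (hxq : Γ.le x q)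
    (hpxq : ShortestTriple Γ.G p x q) : Γ.IsMeet p q x := by
  refine ⟨hxp, hxq, fun y hyp hyq => ?_⟩
  obtain ⟨z, hzxy, hzyp, hzxp⟩ := Γ.modular x y p
  have hyz := (Γ.mem_Icc_of_mem_interval hyp hzyp).1
  have hxz := (Γ.mem_Icc_of_mem_interval hxp hzxp).1
  have hxzq := Γ.shortestTriple_of_le hxz (Γ.convex_setOf_le q x hxq y hyq hzxy)
  have hzxp : Γ.G.dist x z + Γ.G.dist z p = Γ.G.dist x p := hzxp
  have : Γ.G.dist p q ≤ Γ.G.dist p z + Γ.G.dist z q := Γ.connected.dist_triangle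
  have := SimpleGraph.dist_comm (G := Γ.G) (u := p) (v := x)
  have := SimpleGraph.dist_comm (G := Γ.G) (u := p) (v := z)
  unfold ShortestTriple at hpxq hxzq
  obtain rfl : x = z := Γ.connected.dist_eq_zero_iff.mp (by omega)
  exact hyz

def dual : ModularComplex V where
  G := Γ.G
  connected := Γ.connected
  modular := Γ.modular
  ori x y := Γ.ori y x
  ori_adj h := (Γ.ori_adj h).symm
  ori_total h := Γ.ori_total h.symm
  acyclic hxy hyx :=
    Γ.acyclic (Relation.reflTransGen_swap.mp hyx) (Relation.reflTransGen_swap.mp hxy)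
  admissible := fun ⟨h₁₂, h₂₃, h₃₄, h₄₁, h₁₃, h₂₄⟩ =>
    Γ.admissible ⟨h₁₂.symm, h₄₁.symm, h₃₄.symm, h₂₃.symm, h₂₄, h₁₃⟩

theorem dual_le {a b : V} : Γ.dual.le a b ↔ Γ.le b a :=
  Relation.reflTransGen_swap

theorem dual_isMeet {p q j : V} : Γ.dual.IsMeet p q j ↔ Γ.IsJoin p q j := by
  simp only [IsMeet, IsJoin, dual_le]

end ModularComplex

/-- In a modular complex, meets and joins are characterized by
shortest subpaths. -/
theorem meet_join_shortest (Γ : ModularComplex V) :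
    (∀ p q m : V, Γ.IsMeet p q m → ShortestTriple Γ.G p m q) ∧
    (∀ p q x : V, Γ.le x p → Γ.le x q → ShortestTriple Γ.G p x q → Γ.IsMeet p q x) ∧
    (∀ p q j : V, Γ.IsJoin p q j → ShortestTriple Γ.G p j q) ∧
    (∀ p q x : V, Γ.le p x → Γ.le q x → ShortestTriple Γ.G p x q → Γ.IsJoin p q x) := by
  refine ⟨fun _ _ _ => ModularComplex.IsMeet.shortestTriple,
    fun _ _ _ => Γ.isMeet_of_shortestTriple,
    fun _ _ _ hj => (Γ.dual_isMeet.mpr hj).shortestTriple, fun _ _ _ hpx hqx hpxq => ?_⟩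
  exact Γ.dual_isMeet.mp
    (Γ.dual.isMeet_of_shortestTriple (Γ.dual_le.mpr hpx) (Γ.dual_le.mpr hqx) hpxq)

end ZeroExt
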